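/- arXiv:2602.04175 — 4 statements merged into one kernel-verified Lean document; each statement's English description precedes it below -/
import Mathlib

section
/- Let γ_w, γ_n, γ_wn > 0 with (√γ_w + √γ_n)² - 2γ_wn ≥ c_min > 0, and let 0 < S_ε < 1/2. Define μ(S) = γ_w ln S - γ_n ln(1-S) + γ_wn(1-2S). Then there exist positive constants L_min and L_max such that for all S, S̃ ∈ [S_ε, 1 - S_ε] with S ≥ S̃, L_min (S - S̃) ≤ μ(S) - μ(S̃) ≤ L_max (S - S̃). -/
/-!
μ' (S) = γ_w / S + γ_n / (1 - S) - 2 γ_wn, and by Cauchy–Schwarz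
γ_w / S + γ_n / (1 - S) ≥ (√γ_w + √γ_n)², so μ' ≥ c_min on (0, 1). On [S_ε, 1 - S_ε] both
denominators are at least S_ε, so μ' ≤ (γ_w + γ_n) / S_ε - 2 γ_wn. The mean value theorem turns
these derivative bounds into the two Lipschitz bounds; the upper constant is positive because it
dominates μ' (1/2) ≥ c_min.
-/

open Real Set

theorem Convex.mul_sub_le_image_sub_and_image_sub_le_mul_sub {D : Set ℝ} (hD : Convex ℝ D)
    {f f' : ℝ → ℝ} (hf : ∀ x ∈ D, HasDerivAt f (f' x) x) {m M : ℝ}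
    (hm : ∀ x ∈ D, m ≤ f' x) (hM : ∀ x ∈ D, f' x ≤ M) {x y : ℝ} (hx : x ∈ D) (hy : y ∈ D)
    (hxy : x ≤ y) : m * (y - x) ≤ f y - f x ∧ f y - f x ≤ M * (y - x) := by
  have hcont : ContinuousOn f D := fun z hz => (hf z hz).continuousAt.continuousWithinAt
  have hdiff : DifferentiableOn ℝ f (interior D) := fun z hz =>
    (hf z (interior_subset hz)).differentiableAt.differentiableWithinAt
  have hderiv : ∀ z ∈ interior D, deriv f z = f' z := fun z hz =>
    (hf z (interior_subset hz)).deriv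
  refine ⟨hD.mul_sub_le_image_sub_of_le_deriv hcont hdiff ?_ x hx y hy hxy,
    hD.image_sub_le_mul_sub_of_deriv_le hcont hdiff ?_ x hx y hy hxy⟩
  · exact fun z hz => hderiv z hz ▸ hm z (interior_subset hz)
  · exact fun z hz => hderiv z hz ▸ hM z (interior_subset hz)

theorem hasDerivAt_mul_log_sub_mul_log_one_sub_add (a b c : ℝ) {S : ℝ} (hS₀ : S ≠ 0)
    (hS₁ : S ≠ 1) :
    HasDerivAt (fun S => a * log S - b * log (1 - S) + c * (1 - 2 * S))
      (a / S + b / (1 - S) - 2 * c) S := by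
  have hlog : HasDerivAt (fun S => log (1 - S)) (-1 / (1 - S)) S := by
    simpa using ((hasDerivAt_id S).const_sub 1).log (sub_ne_zero.mpr hS₁.symm)
  have hlin : HasDerivAt (fun S : ℝ => 1 - 2 * S) (-2) S := by
    simpa using ((hasDerivAt_id S).const_mul 2).const_sub 1
  exact ((((hasDerivAt_log hS₀).const_mul a).sub (hlog.const_mul b)).add
    (hlin.const_mul c)).congr_deriv (by ring)

theorem sq_sqrt_add_sqrt_le_div_add_div_one_sub {a b S : ℝ} (ha : 0 ≤ a) (hb : 0 ≤ b)
    (hS₀ : 0 < S) (hS₁ : S < 1) : (√a + √b) ^ 2 ≤ a / S + b / (1 - S) := by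
  have h1S : 0 < 1 - S := sub_pos.mpr hS₁
  rw [div_add_div _ _ hS₀.ne' h1S.ne', le_div_iff₀ (by positivity)]
  nlinarith [sq_nonneg (√a * (1 - S) - √b * S), sq_sqrt ha, sq_sqrt hb]

theorem div_add_div_one_sub_le_add_div {a b ε S : ℝ} (ha : 0 ≤ a) (hb : 0 ≤ b) (hε : 0 < ε)
    (hS : S ∈ Icc ε (1 - ε)) : a / S + b / (1 - S) ≤ (a + b) / ε := by
  have ha' : a / S ≤ a / ε := div_le_div_of_nonneg_left ha hε hS.1
  have hb' : b / (1 - S) ≤ b / ε := div_le_div_of_nonneg_left hb hε (by linarith [hS.2])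
  rw [add_div]
  exact add_le_add ha' hb'

theorem stmt_3_general (γw γn γwn c_min Sε : ℝ) (hw : 0 < γw) (hn : 0 < γn)
    (hc : 0 < c_min) (hcond : (Real.sqrt γw + Real.sqrt γn) ^ 2 - 2 * γwn ≥ c_min)
    (hSε : 0 < Sε) (hSε' : Sε < 1 / 2)
    (μ : ℝ → ℝ)
    (hμ : ∀ S, μ S = γw * Real.log S - γn * Real.log (1 - S) + γwn * (1 - 2 * S)) :
    ∃ Lmin Lmax : ℝ, 0 < Lmin ∧ 0 < Lmax ∧
      ∀ S ∈ Icc Sε (1 - Sε), ∀ S' ∈ Icc Sε (1 - Sε), S' ≤ S →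
        Lmin * (S - S') ≤ μ S - μ S' ∧ μ S - μ S' ≤ Lmax * (S - S') := by
  obtain rfl : μ = _ := funext hμ
  have hpos : ∀ S ∈ Icc Sε (1 - Sε), 0 < S ∧ S < 1 := fun S hS =>
    ⟨hSε.trans_le hS.1, by linarith [hS.2]⟩
  have hlower : ∀ S ∈ Icc Sε (1 - Sε), c_min ≤ γw / S + γn / (1 - S) - 2 * γwn := fun S hS => by
    linarith [sq_sqrt_add_sqrt_le_div_add_div_one_sub hw.le hn.le (hpos S hS).1 (hpos S hS).2]
  have hupper : ∀ S ∈ Icc Sε (1 - Sε),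
      γw / S + γn / (1 - S) - 2 * γwn ≤ (γw + γn) / Sε - 2 * γwn := fun S hS => by
    linarith [div_add_div_one_sub_le_add_div hw.le hn.le hSε hS]
  have hhalf : (1 / 2 : ℝ) ∈ Icc Sε (1 - Sε) := ⟨hSε'.le, by linarith⟩
  refine ⟨c_min, (γw + γn) / Sε - 2 * γwn, hc,
    hc.trans_le ((hlower _ hhalf).trans (hupper _ hhalf)), ?_⟩
  intro S hS S' hS' hS'S
  exact (convex_Icc _ _).mul_sub_le_image_sub_and_image_sub_le_mul_sub
    (fun x hx => hasDerivAt_mul_log_sub_mul_log_one_sub_add γw γn γwn (hpos x hx).1.ne'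
      (hpos x hx).2.ne) hlower hupper hS' hS hS'S

theorem stmt_3 (γw γn γwn c_min Sε : ℝ) (hw : 0 < γw) (hn : 0 < γn) (hwn : 0 < γwn)
    (hc : 0 < c_min) (hcond : (Real.sqrt γw + Real.sqrt γn) ^ 2 - 2 * γwn ≥ c_min)
    (hSε : 0 < Sε) (hSε' : Sε < 1 / 2)
    (μ : ℝ → ℝ)
    (hμ : ∀ S, μ S = γw * Real.log S - γn * Real.log (1 - S) + γwn * (1 - 2 * S)) :
    ∃ Lmin Lmax : ℝ, 0 < Lmin ∧ 0 < Lmax ∧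
      ∀ S ∈ Icc Sε (1 - Sε), ∀ S' ∈ Icc Sε (1 - Sε), S' ≤ S →
        Lmin * (S - S') ≤ μ S - μ S' ∧ μ S - μ S' ≤ Lmax * (S - S') :=
  stmt_3_general γw γn γwn c_min Sε hw hn hc hcond hSε hSε' μ hμ
end

section
/- Let γ_w, γ_n, γ_wn > 0 with γ_w/x + γ_n/(1-x) - 2γ_wn ≥ c_min > 0 for all x ∈ (0,1). Define F(S) = γ_w S(ln S - 1) + γ_n(1-S)(ln(1-S)-1) + γ_wn S(1-S) and μ(S) = F'(S). Then for all a, b ∈ (0,1): F(b) - F(a) + (c_min/2)(b - a)² ≤ (b - a) μ(b). -/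
/-!
Since μ' = γ_w/S + γ_n/(1-S) - 2γ_wn ≥ c_min on (0,1), the function F - (c_min/2) S² is convex
there, and the inequality is its tangent-line inequality at b, after adding back the quadratic.
-/

open Real Set

theorem ConvexOn.sub_le_mul_of_hasDerivAt {S : Set ℝ} {f : ℝ → ℝ} {a b f' : ℝ}
    (hfc : ConvexOn ℝ S f) (ha : a ∈ S) (hb : b ∈ S) (hf : HasDerivAt f f' b) :
    f b - f a ≤ (b - a) * f' := by
  rcases lt_trichotomy a b with hab | rfl | hab
  · have := hfc.slope_le_of_hasDerivAt ha hb hab hf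
    rw [slope_def_field, div_le_iff₀ (sub_pos.2 hab)] at this
    linarith
  · simp
  · have := hfc.le_slope_of_hasDerivAt hb ha hab hf
    rw [slope_def_field, le_div_iff₀ (sub_pos.2 hab)] at this
    linarith

theorem sub_add_half_mul_sq_le_of_hasDerivAt2_ge {D : Set ℝ} (hD : Convex ℝ D)
    (hDo : IsOpen D) {f f' f'' : ℝ → ℝ} {m : ℝ}
    (hf : ∀ x ∈ D, HasDerivAt f (f' x) x) (hf' : ∀ x ∈ D, HasDerivAt f' (f'' x) x)
    (hm : ∀ x ∈ D, m ≤ f'' x) {a b : ℝ} (ha : a ∈ D) (hb : b ∈ D) :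
    f b - f a + m / 2 * (b - a) ^ 2 ≤ (b - a) * f' b := by
  have hg : ∀ x ∈ D, HasDerivAt (fun y ↦ f y - m / 2 * y ^ 2) (f' x - m * x) x := fun x hx ↦
    ((hf x hx).sub ((hasDerivAt_pow 2 x).const_mul (m / 2))).congr_deriv (by ring)
  have hg' : ∀ x ∈ D, HasDerivAt (fun y ↦ f' y - m * y) (f'' x - m) x := fun x hx ↦
    ((hf' x hx).sub ((hasDerivAt_id x).const_mul m)).congr_deriv (by simp)
  have hconv : ConvexOn ℝ D (fun y ↦ f y - m / 2 * y ^ 2) := by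
    refine convexOn_of_hasDerivWithinAt2_nonneg hD (f' := fun x ↦ f' x - m * x)
      (f'' := fun x ↦ f'' x - m)
      (fun x hx ↦ (hg x hx).continuousAt.continuousWithinAt) ?_ ?_ ?_ <;> rw [hDo.interior_eq]
    · exact fun x hx ↦ (hg x hx).hasDerivWithinAt
    · exact fun x hx ↦ (hg' x hx).hasDerivWithinAt
    · exact fun x hx ↦ sub_nonneg.2 (hm x hx)
  have := hconv.sub_le_mul_of_hasDerivAt ha hb (hg b hb)
  linarith

noncomputable def logFreeEnergy (γw γn γwn S : ℝ) : ℝ :=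
  γw * S * (log S - 1) + γn * (1 - S) * (log (1 - S) - 1) + γwn * S * (1 - S)

noncomputable def logChemicalPotential (γw γn γwn S : ℝ) : ℝ :=
  γw * log S - γn * log (1 - S) + γwn * (1 - 2 * S)

theorem hasDerivAt_logFreeEnergy (γw γn γwn : ℝ) {S : ℝ} (h0 : S ≠ 0) (h1 : S ≠ 1) :
    HasDerivAt (logFreeEnergy γw γn γwn) (logChemicalPotential γw γn γwn S) S := by
  have h1' : 1 - S ≠ 0 := sub_ne_zero.2 h1.symm
  have hsub : HasDerivAt (fun x ↦ 1 - x) (-1) S := (hasDerivAt_id' S).const_sub 1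
  have hlog₁ : HasDerivAt (fun x ↦ log (1 - x)) ((1 - S)⁻¹ * (-1)) S :=
    (hasDerivAt_log h1').comp S hsub
  exact (((((hasDerivAt_id' S).const_mul γw).mul ((hasDerivAt_log h0).sub_const 1)).add
    ((hsub.const_mul γn).mul (hlog₁.sub_const 1))).add
    (((hasDerivAt_id' S).const_mul γwn).mul hsub)).congr_deriv <| by
      simp only [logChemicalPotential]; field_simp; ring

theorem hasDerivAt_logChemicalPotential (γw γn γwn : ℝ) {S : ℝ} (h0 : S ≠ 0) (h1 : S ≠ 1) :
    HasDerivAt (logChemicalPotential γw γn γwn) (γw / S + γn / (1 - S) - 2 * γwn) S := by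
  have h1' : 1 - S ≠ 0 := sub_ne_zero.2 h1.symm
  have hlog₁ : HasDerivAt (fun x ↦ log (1 - x)) ((1 - S)⁻¹ * (-1)) S :=
    (hasDerivAt_log h1').comp S ((hasDerivAt_id' S).const_sub 1)
  exact ((((hasDerivAt_log h0).const_mul γw).sub (hlog₁.const_mul γn)).add
    ((((hasDerivAt_id' S).const_mul 2).const_sub 1).const_mul γwn)).congr_deriv <| by
      field_simp; ring

theorem stmt_4_general (γw γn γwn c_min : ℝ)
    (hcond : ∀ x ∈ Ioo (0:ℝ) 1, γw / x + γn / (1 - x) - 2 * γwn ≥ c_min)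
    (F μ : ℝ → ℝ)
    (hF : ∀ S, F S = γw * S * (Real.log S - 1) + γn * (1 - S) * (Real.log (1 - S) - 1)
      + γwn * S * (1 - S))
    (hμ : ∀ S ∈ Ioo (0:ℝ) 1, HasDerivAt F (μ S) S) :
    ∀ a ∈ Ioo (0:ℝ) 1, ∀ b ∈ Ioo (0:ℝ) 1,
      F b - F a + c_min / 2 * (b - a) ^ 2 ≤ (b - a) * μ b := by
  have hne {S : ℝ} (hS : S ∈ Ioo (0:ℝ) 1) : S ≠ 0 ∧ S ≠ 1 := ⟨hS.1.ne', hS.2.ne⟩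
  obtain rfl : F = logFreeEnergy γw γn γwn := funext hF
  have hμ_eq {S : ℝ} (hS : S ∈ Ioo (0:ℝ) 1) : μ S = logChemicalPotential γw γn γwn S :=
    (hμ S hS).unique (hasDerivAt_logFreeEnergy γw γn γwn (hne hS).1 (hne hS).2)
  intro a ha b hb
  rw [hμ_eq hb]
  exact sub_add_half_mul_sq_le_of_hasDerivAt2_ge (convex_Ioo 0 1) isOpen_Ioo
    (fun x hx ↦ hasDerivAt_logFreeEnergy γw γn γwn (hne hx).1 (hne hx).2)
    (fun x hx ↦ hasDerivAt_logChemicalPotential γw γn γwn (hne hx).1 (hne hx).2) hcond ha hb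

theorem stmt_4 (γw γn γwn c_min : ℝ) (hw : 0 < γw) (hn : 0 < γn) (hwn : 0 < γwn)
    (hc : 0 < c_min)
    (hcond : ∀ x ∈ Ioo (0:ℝ) 1, γw / x + γn / (1 - x) - 2 * γwn ≥ c_min)
    (F μ : ℝ → ℝ)
    (hF : ∀ S, F S = γw * S * (Real.log S - 1) + γn * (1 - S) * (Real.log (1 - S) - 1)
      + γwn * S * (1 - S))
    (hμ : ∀ S ∈ Ioo (0:ℝ) 1, HasDerivAt F (μ S) S) :
    ∀ a ∈ Ioo (0:ℝ) 1, ∀ b ∈ Ioo (0:ℝ) 1,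
      F b - F a + c_min / 2 * (b - a) ^ 2 ≤ (b - a) * μ b :=
  stmt_4_general γw γn γwn c_min hcond F μ hF hμ
end

section
/- Let γ_w, γ_n, γ_wn > 0 with (√γ_w + √γ_n)² - 2γ_wn ≥ c_min > 0. Define F and μ = F' as in the two-phase flow model, fix 0 < S_ε < 1/2, and for sequences (S^k)_{k=0}^N in [S_ε, 1-S_ε], the telescoping sum satisfies: F(S^N) - F(S^0) + (c_min/2) Σ_{k=0}^{N-1} (S^{k+1} - S^k)² ≤ Σ_{k=0}^{N-1} (S^{k+1} - S^k) μ(S^{k+1}). -/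
open Real Set Finset

/-!
`F` minus `c_min / 2 · S²` is convex on `(0, 1)`: its second derivative is
`γ_w / S + γ_n / (1 - S) - 2 γ_wn - c_min`, and `γ_w / S + γ_n / (1 - S) ≥ (√γ_w + √γ_n)²` by
Cauchy–Schwarz. So `F` is `c_min`-strongly convex there, and the tangent-line inequality for
`F - c_min / 2 · S²` at `S^{k+1}`, evaluated at `S^k`, is the per-step estimate
`F(S^{k+1}) - F(S^k) + c_min / 2 · (S^{k+1} - S^k)² ≤ (S^{k+1} - S^k) μ(S^{k+1})`.
Summing over `k` telescopes the left-hand side.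
-/

lemma ConvexOn.add_mul_sub_le_of_hasDerivAt {s : Set ℝ} {f : ℝ → ℝ} {x y f' : ℝ}
    (hf : ConvexOn ℝ s f) (hx : x ∈ s) (hy : y ∈ s) (hf' : HasDerivAt f f' x) :
    f x + f' * (y - x) ≤ f y := by
  rcases lt_trichotomy x y with hxy | rfl | hxy
  · have h := hf.le_slope_of_hasDerivAt hx hy hxy hf'
    rw [slope_def_field, le_div_iff₀ (sub_pos.mpr hxy)] at h
    linarith
  · simp
  · have h := hf.slope_le_of_hasDerivAt hy hx hxy hf'
    rw [slope_def_field, div_le_iff₀ (sub_pos.mpr hxy)] at h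
    linarith

lemma strongConvexOn_real_iff_convexOn {s : Set ℝ} {m : ℝ} {f : ℝ → ℝ} :
    StrongConvexOn s m f ↔ ConvexOn ℝ s fun x ↦ f x - m / 2 * x ^ 2 := by
  simp only [strongConvexOn_iff_convex, Real.norm_eq_abs, sq_abs]

lemma hasDerivAt_half_mul_sq (m x : ℝ) : HasDerivAt (fun y ↦ m / 2 * y ^ 2) (m * x) x :=
  ((hasDerivAt_pow 2 x).const_mul (m / 2)).congr_deriv (by push_cast; ring)

lemma StrongConvexOn.sub_add_sq_le_of_hasDerivAt {s : Set ℝ} {m : ℝ} {f : ℝ → ℝ} {a b f' : ℝ}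
    (hf : StrongConvexOn s m f) (ha : a ∈ s) (hb : b ∈ s) (hf' : HasDerivAt f f' b) :
    f b - f a + m / 2 * (b - a) ^ 2 ≤ (b - a) * f' := by
  have h := (strongConvexOn_real_iff_convexOn.mp hf).add_mul_sub_le_of_hasDerivAt hb ha
    (hf'.sub (hasDerivAt_half_mul_sq m b))
  linarith

lemma StrongConvexOn.sub_add_sum_sq_le {s : Set ℝ} {m : ℝ} {f f' : ℝ → ℝ}
    (hf : StrongConvexOn s m f) (hf' : ∀ x ∈ s, HasDerivAt f (f' x) x) {N : ℕ} {u : ℕ → ℝ}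
    (hu : ∀ k ≤ N, u k ∈ s) :
    f (u N) - f (u 0) + m / 2 * ∑ k ∈ range N, (u (k + 1) - u k) ^ 2 ≤
      ∑ k ∈ range N, (u (k + 1) - u k) * f' (u (k + 1)) := by
  have hstep : ∀ k ∈ range N,
      f (u (k + 1)) - f (u k) + m / 2 * (u (k + 1) - u k) ^ 2 ≤
        (u (k + 1) - u k) * f' (u (k + 1)) := by
    intro k hk
    have hk := mem_range.mp hk
    have hk1 : u (k + 1) ∈ s := hu (k + 1) hk
    exact hf.sub_add_sq_le_of_hasDerivAt (hu k hk.le) hk1 (hf' _ hk1)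
  calc f (u N) - f (u 0) + m / 2 * ∑ k ∈ range N, (u (k + 1) - u k) ^ 2
      = ∑ k ∈ range N, (f (u (k + 1)) - f (u k) + m / 2 * (u (k + 1) - u k) ^ 2) := by
        rw [sum_add_distrib, sum_range_sub (fun k ↦ f (u k)), mul_sum]
    _ ≤ _ := sum_le_sum hstep

lemma strongConvexOn_of_hasDerivAt2_ge {D : Set ℝ} (hD : Convex ℝ D) (hDo : IsOpen D)
    {m : ℝ} {f f' f'' : ℝ → ℝ} (hf' : ∀ x ∈ D, HasDerivAt f (f' x) x)
    (hf'' : ∀ x ∈ D, HasDerivAt f' (f'' x) x) (hm : ∀ x ∈ D, m ≤ f'' x) :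
    StrongConvexOn D m f := by
  have hg' : ∀ x ∈ D, HasDerivAt (fun y ↦ f y - m / 2 * y ^ 2) (f' x - m * x) x :=
    fun x hx ↦ (hf' x hx).sub (hasDerivAt_half_mul_sq m x)
  rw [strongConvexOn_real_iff_convexOn]
  refine convexOn_of_hasDerivWithinAt2_nonneg (f' := fun x ↦ f' x - m * x)
    (f'' := fun x ↦ f'' x - m) hD (fun x hx ↦ (hg' x hx).continuousAt.continuousWithinAt) ?_ ?_ ?_
  all_goals rw [hDo.interior_eq]
  · exact fun x hx ↦ (hg' x hx).hasDerivWithinAt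
  · exact fun x hx ↦ ((hf'' x hx).sub ((hasDerivAt_id' x).const_mul m)).hasDerivWithinAt
      |>.congr_deriv (by simp)
  · exact fun x hx ↦ sub_nonneg.mpr (hm x hx)

lemma sqrt_add_sqrt_sq_le_div_add_div {a b x : ℝ} (ha : 0 ≤ a) (hb : 0 ≤ b) (hx₀ : 0 < x)
    (hx₁ : x < 1) : (√a + √b) ^ 2 ≤ a / x + b / (1 - x) := by
  have hx₁' : 0 < 1 - x := sub_pos.mpr hx₁
  rw [div_add_div _ _ hx₀.ne' hx₁'.ne', le_div_iff₀ (by positivity)]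
  nlinarith [sq_nonneg (√a * (1 - x) - √b * x), sq_sqrt ha, sq_sqrt hb]

lemma hasDerivAt_mul_log_sub_one {x : ℝ} (hx : x ≠ 0) :
    HasDerivAt (fun y ↦ y * (log y - 1)) (log x) x :=
  ((hasDerivAt_id' x).mul ((hasDerivAt_log hx).sub_const 1)).congr_deriv (by field_simp; ring)

section TwoPhase

variable (γw γn γwn : ℝ)

noncomputable def twoPhaseEnergy (S : ℝ) : ℝ :=
  γw * S * (log S - 1) + γn * (1 - S) * (log (1 - S) - 1) + γwn * S * (1 - S)

noncomputable def twoPhasePotential (S : ℝ) : ℝ :=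
  γw * log S - γn * log (1 - S) + γwn * (1 - 2 * S)

variable {γw γn γwn}

lemma hasDerivAt_twoPhaseEnergy {S : ℝ} (hS₀ : S ≠ 0) (hS₁ : 1 - S ≠ 0) :
    HasDerivAt (twoPhaseEnergy γw γn γwn) (twoPhasePotential γw γn γwn S) S := by
  have hw := (hasDerivAt_mul_log_sub_one hS₀).const_mul γw
  have hn :=
    ((hasDerivAt_mul_log_sub_one hS₁).comp S ((hasDerivAt_id' S).const_sub 1)).const_mul γn
  have hwn := ((hasDerivAt_id' S).mul ((hasDerivAt_id' S).const_sub 1)).const_mul γwn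
  have hsplit : twoPhaseEnergy γw γn γwn = fun y ↦
      γw * (y * (log y - 1)) + γn * ((1 - y) * (log (1 - y) - 1)) + γwn * (y * (1 - y)) := by
    funext y
    simp only [twoPhaseEnergy]
    ring
  rw [hsplit]
  exact ((hw.add hn).add hwn).congr_deriv (by simp only [twoPhasePotential]; ring)

lemma hasDerivAt_twoPhasePotential {S : ℝ} (hS₀ : S ≠ 0) (hS₁ : 1 - S ≠ 0) :
    HasDerivAt (twoPhasePotential γw γn γwn) (γw / S + γn / (1 - S) - 2 * γwn) S := by
  have hw := (hasDerivAt_log hS₀).const_mul γw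
  have hn := (((hasDerivAt_id' S).const_sub 1).log hS₁).const_mul γn
  have hwn := (((hasDerivAt_id' S).const_mul 2).const_sub 1).const_mul γwn
  refine ((hw.sub hn).add hwn).congr_deriv ?_
  field_simp
  ring

lemma strongConvexOn_twoPhaseEnergy (hw : 0 ≤ γw) (hn : 0 ≤ γn) :
    StrongConvexOn (Ioo 0 1) ((√γw + √γn) ^ 2 - 2 * γwn) (twoPhaseEnergy γw γn γwn) := by
  refine strongConvexOn_of_hasDerivAt2_ge (convex_Ioo 0 1) isOpen_Ioo
    (fun S hS ↦ hasDerivAt_twoPhaseEnergy hS.1.ne' (sub_pos.mpr hS.2).ne')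
    (fun S hS ↦ hasDerivAt_twoPhasePotential hS.1.ne' (sub_pos.mpr hS.2).ne') fun S hS ↦ ?_
  linarith [sqrt_add_sqrt_sq_le_div_add_div hw hn hS.1 hS.2]

end TwoPhase

theorem stmt_16_general (γw γn γwn c_min Sε : ℝ) (hw : 0 < γw) (hn : 0 < γn)
    (hcond : (Real.sqrt γw + Real.sqrt γn) ^ 2 - 2 * γwn ≥ c_min)
    (hSε : 0 < Sε)
    (F μ : ℝ → ℝ)
    (hF : ∀ S, F S = γw * S * (Real.log S - 1) + γn * (1 - S) * (Real.log (1 - S) - 1)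
      + γwn * S * (1 - S))
    (hμ : ∀ S, μ S = γw * Real.log S - γn * Real.log (1 - S) + γwn * (1 - 2 * S))
    (N : ℕ) (S : ℕ → ℝ) (hS : ∀ k ≤ N, S k ∈ Icc Sε (1 - Sε)) :
    F (S N) - F (S 0) + c_min / 2 * ∑ k ∈ Finset.range N, (S (k + 1) - S k) ^ 2 ≤
      ∑ k ∈ Finset.range N, (S (k + 1) - S k) * μ (S (k + 1)) := by
  obtain rfl : F = twoPhaseEnergy γw γn γwn := funext hF
  obtain rfl : μ = twoPhasePotential γw γn γwn := funext hμ
  have hconv := (strongConvexOn_twoPhaseEnergy hw.le hn.le (γwn := γwn)).mono hcond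
  have hIcc : Icc Sε (1 - Sε) ⊆ Ioo 0 1 := Icc_subset_Ioo hSε (by linarith)
  exact hconv.sub_add_sum_sq_le
    (fun x hx ↦ hasDerivAt_twoPhaseEnergy hx.1.ne' (sub_pos.mpr hx.2).ne')
    fun k hk ↦ hIcc (hS k hk)

theorem stmt_16 (γw γn γwn c_min Sε : ℝ) (hw : 0 < γw) (hn : 0 < γn) (hwn : 0 < γwn)
    (hc : 0 < c_min) (hcond : (Real.sqrt γw + Real.sqrt γn) ^ 2 - 2 * γwn ≥ c_min)
    (hSε : 0 < Sε) (hSε' : Sε < 1 / 2)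
    (F μ : ℝ → ℝ)
    (hF : ∀ S, F S = γw * S * (Real.log S - 1) + γn * (1 - S) * (Real.log (1 - S) - 1)
      + γwn * S * (1 - S))
    (hμ : ∀ S, μ S = γw * Real.log S - γn * Real.log (1 - S) + γwn * (1 - 2 * S))
    (N : ℕ) (S : ℕ → ℝ) (hS : ∀ k ≤ N, S k ∈ Icc Sε (1 - Sε)) :
    F (S N) - F (S 0) + c_min / 2 * ∑ k ∈ Finset.range N, (S (k + 1) - S k) ^ 2 ≤
      ∑ k ∈ Finset.range N, (S (k + 1) - S k) * μ (S (k + 1)) :=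
  stmt_16_general γw γn γwn c_min Sε hw hn hcond hSε F μ hF hμ N S hS
end

section
/- Let γ_w, γ_n, γ_wn > 0 with γ_w/x + γ_n/(1-x) - 2γ_wn ≥ c_min > 0 on (0,1) and let 𝒮 be the inverse of μ(S) = γ_w ln S - γ_n ln(1-S) + γ_wn(1-2S). Then 𝒮 is continuously differentiable on ℝ with 0 < 𝒮'(m) = 1/μ'(𝒮(m)) ≤ 1/c_min for every m ∈ ℝ. -/
open Real Set

/-!
Since `μ' = γw / S + γn / (1 - S) - 2 γwn ≥ c_min > 0` on `(0, 1)`, the potential `μ` is strictly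
increasing there, so its left inverse `𝒮` is strictly increasing with range `(0, 1)`, hence
continuous. The inverse function theorem then gives `𝒮' = 1 / μ'(𝒮)`, which is continuous and lies
in `(0, 1 / c_min]`.
-/

section LeftInverse

variable {f f' g : ℝ → ℝ} {s : Set ℝ}

theorem StrictMonoOn.strictMono_of_leftInverse (hf : StrictMonoOn f s) (hgs : ∀ m, g m ∈ s)
    (hfg : ∀ m, f (g m) = m) : StrictMono g := fun a b hab => by
  rwa [← hf.lt_iff_lt (hgs a) (hgs b), hfg, hfg]

theorem Set.InjOn.range_eq_of_leftInverse (hf : InjOn f s) (hgs : ∀ m, g m ∈ s)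
    (hfg : ∀ m, f (g m) = m) : range g = s :=
  (range_subset_iff.2 hgs).antisymm fun x hx => ⟨f x, hf (hgs _) hx (hfg _)⟩

theorem StrictMonoOn.continuous_of_leftInverse (hs : IsOpen s) (hf : StrictMonoOn f s)
    (hgs : ∀ m, g m ∈ s) (hfg : ∀ m, f (g m) = m) : Continuous g := by
  refine continuous_iff_continuousAt.2 fun m =>
    ((hf.strictMono_of_leftInverse hgs hfg).strictMonoOn univ).continuousAt_of_image_mem_nhds
      Filter.univ_mem ?_
  rw [image_univ, hf.injOn.range_eq_of_leftInverse hgs hfg]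
  exact hs.mem_nhds (hgs m)

theorem continuous_leftInverse_of_deriv_pos (hs : IsOpen s) (hconv : Convex ℝ s)
    (hf : ∀ x ∈ s, HasDerivAt f (f' x) x) (hf'pos : ∀ x ∈ s, 0 < f' x)
    (hgs : ∀ m, g m ∈ s) (hfg : ∀ m, f (g m) = m) : Continuous g := by
  have hmono : StrictMonoOn f s := by
    refine strictMonoOn_of_deriv_pos hconv
      (fun x hx => (hf x hx).continuousAt.continuousWithinAt) fun x hx => ?_
    rw [hs.interior_eq] at hx
    rw [(hf x hx).deriv]
    exact hf'pos x hx
  exact hmono.continuous_of_leftInverse hs hgs hfg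

theorem hasDerivAt_leftInverse_of_deriv_pos (hs : IsOpen s) (hconv : Convex ℝ s)
    (hf : ∀ x ∈ s, HasDerivAt f (f' x) x) (hf'pos : ∀ x ∈ s, 0 < f' x)
    (hgs : ∀ m, g m ∈ s) (hfg : ∀ m, f (g m) = m) (m : ℝ) :
    HasDerivAt g (1 / f' (g m)) m := by
  rw [one_div]
  exact HasDerivAt.of_local_left_inverse
    (continuous_leftInverse_of_deriv_pos hs hconv hf hf'pos hgs hfg).continuousAt
    (hf _ (hgs m)) (hf'pos _ (hgs m)).ne' (Filter.Eventually.of_forall hfg)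

theorem contDiff_one_leftInverse_of_deriv_pos (hs : IsOpen s) (hconv : Convex ℝ s)
    (hf : ∀ x ∈ s, HasDerivAt f (f' x) x) (hf'pos : ∀ x ∈ s, 0 < f' x)
    (hf'cont : ContinuousOn f' s) (hgs : ∀ m, g m ∈ s) (hfg : ∀ m, f (g m) = m) :
    ContDiff ℝ 1 g := by
  have hg' := hasDerivAt_leftInverse_of_deriv_pos hs hconv hf hf'pos hgs hfg
  have hg := continuous_leftInverse_of_deriv_pos hs hconv hf hf'pos hgs hfg
  rw [contDiff_one_iff_deriv, funext fun m => (hg' m).deriv]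
  exact ⟨fun m => (hg' m).differentiableAt,
    continuous_const.div (hf'cont.comp_continuous hg hgs) fun m => (hf'pos _ (hgs m)).ne'⟩

end LeftInverse

theorem hasDerivAt_saturationPotential {γw γn γwn S : ℝ} (hS : S ∈ Ioo (0:ℝ) 1) :
    HasDerivAt (fun S => γw * log S - γn * log (1 - S) + γwn * (1 - 2 * S))
      (γw / S + γn / (1 - S) - 2 * γwn) S := by
  have h1S : 1 - S ≠ 0 := sub_ne_zero.2 hS.2.ne'
  have h := (((hasDerivAt_log hS.1.ne').const_mul γw).sub
    (((hasDerivAt_log h1S).comp S ((hasDerivAt_id S).const_sub 1)).const_mul γn)).add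
    (((hasDerivAt_id S).const_mul 2).const_sub 1 |>.const_mul γwn)
  rw [show γw / S + γn / (1 - S) - 2 * γwn = γw * S⁻¹ - γn * ((1 - S)⁻¹ * -1) + γwn * -(2 * 1)
    by field_simp; ring]
  exact h

theorem continuousOn_saturationPotential_deriv (γw γn γwn : ℝ) :
    ContinuousOn (fun S => γw / S + γn / (1 - S) - 2 * γwn) (Ioo (0:ℝ) 1) :=
  ((continuousOn_const.div continuousOn_id fun _ hS => hS.1.ne').add
    (continuousOn_const.div (continuousOn_const.sub continuousOn_id)
      fun _ hS => sub_ne_zero.2 hS.2.ne')).sub continuousOn_const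

theorem stmt_18_general (γw γn γwn c_min : ℝ)
    (hc : 0 < c_min)
    (hcond : ∀ x ∈ Ioo (0:ℝ) 1, γw / x + γn / (1 - x) - 2 * γwn ≥ c_min)
    (μ 𝒮 : ℝ → ℝ)
    (hμ : ∀ S, μ S = γw * Real.log S - γn * Real.log (1 - S) + γwn * (1 - 2 * S))
    (h𝒮 : ∀ m : ℝ, 𝒮 m ∈ Ioo (0:ℝ) 1 ∧ μ (𝒮 m) = m) :
    ContDiff ℝ 1 𝒮 ∧
    ∀ m : ℝ,
      HasDerivAt 𝒮 (1 / (γw / 𝒮 m + γn / (1 - 𝒮 m) - 2 * γwn)) m ∧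
      0 < 1 / (γw / 𝒮 m + γn / (1 - 𝒮 m) - 2 * γwn) ∧
      1 / (γw / 𝒮 m + γn / (1 - 𝒮 m) - 2 * γwn) ≤ 1 / c_min := by
  have hμ' : ∀ S ∈ Ioo (0:ℝ) 1, HasDerivAt μ (γw / S + γn / (1 - S) - 2 * γwn) S :=
    fun S hS => funext hμ ▸ hasDerivAt_saturationPotential hS
  have hpos : ∀ S ∈ Ioo (0:ℝ) 1, 0 < γw / S + γn / (1 - S) - 2 * γwn :=
    fun S hS => hc.trans_le (hcond S hS)
  have h𝒮mem m := (h𝒮 m).1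
  have hμ𝒮 m := (h𝒮 m).2
  refine ⟨contDiff_one_leftInverse_of_deriv_pos isOpen_Ioo (convex_Ioo 0 1) hμ' hpos
      (continuousOn_saturationPotential_deriv γw γn γwn) h𝒮mem hμ𝒮, fun m => ⟨?_, ?_, ?_⟩⟩
  · exact hasDerivAt_leftInverse_of_deriv_pos isOpen_Ioo (convex_Ioo 0 1) hμ' hpos h𝒮mem hμ𝒮 m
  · exact one_div_pos.2 (hpos _ (h𝒮mem m))
  · exact one_div_le_one_div_of_le hc (hcond _ (h𝒮mem m))

theorem stmt_18 (γw γn γwn c_min : ℝ) (hw : 0 < γw) (hn : 0 < γn) (hwn : 0 < γwn)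
    (hc : 0 < c_min)
    (hcond : ∀ x ∈ Ioo (0:ℝ) 1, γw / x + γn / (1 - x) - 2 * γwn ≥ c_min)
    (μ 𝒮 : ℝ → ℝ)
    (hμ : ∀ S, μ S = γw * Real.log S - γn * Real.log (1 - S) + γwn * (1 - 2 * S))
    (h𝒮 : ∀ m : ℝ, 𝒮 m ∈ Ioo (0:ℝ) 1 ∧ μ (𝒮 m) = m) :
    ContDiff ℝ 1 𝒮 ∧
    ∀ m : ℝ,
      HasDerivAt 𝒮 (1 / (γw / 𝒮 m + γn / (1 - 𝒮 m) - 2 * γwn)) m ∧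
      0 < 1 / (γw / 𝒮 m + γn / (1 - 𝒮 m) - 2 * γwn) ∧
      1 / (γw / 𝒮 m + γn / (1 - 𝒮 m) - 2 * γwn) ≤ 1 / c_min :=
  stmt_18_general γw γn γwn c_min hc hcond μ 𝒮 hμ h𝒮
end
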